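/- arXiv:1004.0224 — 3 statements merged into one kernel-verified Lean document; each statement's English description precedes it below -/
import Mathlib

section
/- For a CM-type Φ = {φ₁,…,φ_N} of K, the map r_Φ : G → Ind defined by r_Φ(τ)(φᵢH₀) = 0 if τ⁻¹φᵢ ∈ Φ and r_Φ(τ)(φᵢH₀) = 1 otherwise is a 1-cocycle, i.e. r_Φ(τ₁τ₂) = r_Φ(τ₁) + τ₁·r_Φ(τ₂) for all τ₁, τ₂ ∈ G, and its restriction to C equals the map r. -/
/- Common combinatorial skeleton for the Galois-theoretic setting of the paper:
`G = Gal(K^c/ℚ)`, `H = Gal(K^c/K)`, `H₀ = Gal(K^c/K₀)`, `ι` the complex conjugation.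
Embeddings `K ↪ ℂ` correspond to left cosets `G ⧸ H`, embeddings `K₀ ↪ ℂ` to `G ⧸ H₀`. -/

open Pointwise
open scoped Classical

variable {G : Type} [Group G]

/-- A CM-type of `K`: a set `Φ` of embeddings `K ↪ ℂ` (i.e. of cosets in `G ⧸ H`) such that
`Φ` and `ιΦ` are disjoint and every embedding lies in `Φ ∪ ιΦ`. -/
def IsCMType (H : Subgroup G) (ι : G) (Φ : Set (G ⧸ H)) : Prop :=
  (∀ φ ∈ Φ, ι • φ ∉ Φ) ∧ ∀ φ : G ⧸ H, φ ∈ Φ ∨ ι • φ ∈ Φ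

/-- `S_Φ = ⋃_{φ ∈ Φ} φH ⊆ G`. -/
def SPhi (H : Subgroup G) (Φ : Set (G ⧸ H)) : Set G := {g : G | (g : G ⧸ H) ∈ Φ}

/-- `H̃(Φ) = {σ ∈ G : σ S_Φ = S_Φ}`. -/
def Htilde (H : Subgroup G) (Φ : Set (G ⧸ H)) : Subgroup G := MulAction.stabilizer G (SPhi H Φ)

/-- The natural projection `G ⧸ H → G ⧸ H₀` (restriction of embeddings of `K` to `K₀`). -/
def proj (H H₀ : Subgroup G) (h : H ≤ H₀) : G ⧸ H → G ⧸ H₀ :=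
  Quotient.map' id fun a b hab => by
    rw [QuotientGroup.leftRel_apply] at *
    exact h hab

open Classical in
/-- The 1-cocycle `r_Φ : G → Ind`, `r_Φ(τ)(φᵢH₀) = 0` iff `τ⁻¹φᵢ ∈ Φ`, where `φᵢ` is the
unique member of `Φ` lying over the coset `φᵢH₀`. -/
noncomputable def rPhi (H H₀ : Subgroup G) (h : H ≤ H₀) (Φ : Set (G ⧸ H)) (τ : G) :
    (G ⧸ H₀) → ZMod 2 :=
  fun x => if ∃ φ ∈ Φ, proj H H₀ h φ = x ∧ τ⁻¹ • φ ∈ Φ then 0 else 1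

/-- The action of `G` on `Ind = Map(G/H₀, ℤ/2ℤ)`, `(σ·f)(τH₀) = f(σ⁻¹τH₀)`. -/
def indAct (H₀ : Subgroup G) (σ : G) (f : (G ⧸ H₀) → ZMod 2) : (G ⧸ H₀) → ZMod 2 :=
  fun x => f (σ⁻¹ • x)

/-- For `f ∈ Ind`, the CM-type `Φ_f = {ι^{f(φ₁H₀)}φ₁, …, ι^{f(φ_NH₀)}φ_N}` attached to a fixed
CM-type `Φ₀`. -/
noncomputable def PhiF (H H₀ : Subgroup G) (h : H ≤ H₀) (ι : G) (Φ₀ : Set (G ⧸ H))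
    (f : (G ⧸ H₀) → ZMod 2) : Set (G ⧸ H) :=
  (fun φ => ι ^ (f (proj H H₀ h φ)).val • φ) '' Φ₀

/-- The `*`-action of `G` on `Ind`: `τ * f := r_{Φ₀}(τ) + τ·f`. -/
noncomputable def starAct (H H₀ : Subgroup G) (h : H ≤ H₀) (Φ₀ : Set (G ⧸ H)) (τ : G)
    (f : (G ⧸ H₀) → ZMod 2) : (G ⧸ H₀) → ZMod 2 :=
  rPhi H H₀ h Φ₀ τ + indAct H₀ τ f

/-- The map `r : C → Ind` attached to a totally positive `d ∈ K₀` with `K = K₀(√−d)`: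
`r(a)(φᵢH₀) = 0` if `a(√(−φᵢ(d))) = √(−φᵢ(d))` and `r(a)(φᵢH₀) = 1` otherwise. -/
noncomputable def rmap {Kc : Type} [Field Kc] [Algebra ℚ Kc]
    (K₀ : IntermediateField ℚ Kc) (d : Kc) (a : Kc ≃ₐ[ℚ] Kc)
    (x : (Kc ≃ₐ[ℚ] Kc) ⧸ K₀.fixingSubgroup) : ZMod 2 :=
  if ∀ τ : Kc ≃ₐ[ℚ] Kc, (τ : (Kc ≃ₐ[ℚ] Kc) ⧸ K₀.fixingSubgroup) = x →
      ∀ s : Kc, s ^ 2 = -(τ d) → a s = s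
  then 0 else 1

/-!
Let `χ : G ⧸ H → ℤ/2` be the indicator function of the complement of `Φ`. Since every fibre of
`G ⧸ H → G ⧸ H₀` has the form `{φ, ιφ}` and meets `Φ` exactly once, `r_Φ(τ)(φH₀) = χ(τ⁻¹φ) + χ(φ)`
for every `φ`: `r_Φ` is the coboundary of `χ`, which gives the cocycle identity at once. For `a ∈ C`
and an embedding `t`, the point `a⁻¹t` lies over `tH₀`, so `r_Φ(a)(tH₀)` vanishes iff
`a⁻¹tH = tH`, i.e. iff `t⁻¹at` fixes `K = K₀(√−d)`, i.e. iff `a` fixes `t(√−d)`, a square root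
of `−t(d)`; this is the defining condition of `r(a)(tH₀)`.
-/

open IntermediateField

/-- `(H, H₀)` models `(Gal(K^c/K), Gal(K^c/K₀))` for a CM-extension `K / K₀` with complex
conjugation `ι`. -/
structure IsCMPair (H H₀ : Subgroup G) (ι : G) : Prop where
  mul_self : ι * ι = 1
  commute : ∀ g : G, g * ι = ι * g
  mem : ι ∈ H₀
  mem_or_mul_mem : ∀ g ∈ H₀, g ∈ H ∨ ι * g ∈ H

noncomputable def complIndicator {α : Type*} (s : Set α) (a : α) : ZMod 2 := if a ∈ s then 0 else 1

section Group

variable {H H₀ : Subgroup G} (hle : H ≤ H₀) {ι : G} {Φ : Set (G ⧸ H)}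

@[simp]
lemma proj_mk (a : G) : proj H H₀ hle (a : G ⧸ H) = a := rfl

lemma proj_smul (g : G) (φ : G ⧸ H) : proj H H₀ hle (g • φ) = g • proj H H₀ hle φ := by
  obtain ⟨a, rfl⟩ := QuotientGroup.mk_surjective φ
  rfl

lemma proj_surjective : Function.Surjective (proj H H₀ hle) := fun x =>
  let ⟨a, ha⟩ := QuotientGroup.mk_surjective x; ⟨a, ha⟩

lemma IsCMType.smul_mem_iff (hΦ : IsCMType H ι Φ) (φ : G ⧸ H) : ι • φ ∈ Φ ↔ φ ∉ Φ :=
  ⟨fun hι hφ => hΦ.1 φ hφ hι, (hΦ.2 φ).resolve_left⟩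

lemma IsCMType.complIndicator_smul (hΦ : IsCMType H ι Φ) (φ : G ⧸ H) :
    complIndicator Φ (ι • φ) = complIndicator Φ φ + 1 := by
  by_cases hφ : φ ∈ Φ
  · simp [complIndicator, hφ, hΦ.smul_mem_iff]
  · simp [complIndicator, hφ, hΦ.smul_mem_iff]; decide

namespace IsCMPair

lemma smul_eq_self (hp : IsCMPair H H₀ ι) (x : G ⧸ H₀) : ι • x = x := by
  obtain ⟨a, rfl⟩ := QuotientGroup.mk_surjective x
  change ((ι * a : G) : G ⧸ H₀) = a
  rw [← hp.commute, QuotientGroup.mk_mul_of_mem a hp.mem]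

lemma eq_or_eq_smul_of_proj_eq (hp : IsCMPair H H₀ ι) {φ ψ : G ⧸ H}
    (h : proj H H₀ hle φ = proj H H₀ hle ψ) : ψ = φ ∨ ψ = ι • φ := by
  obtain ⟨a, rfl⟩ := QuotientGroup.mk_surjective φ
  obtain ⟨b, rfl⟩ := QuotientGroup.mk_surjective ψ
  have hι : ι⁻¹ = ι := inv_eq_of_mul_eq_one_right hp.mul_self
  refine (hp.mem_or_mul_mem _ (QuotientGroup.eq.mp h)).imp (fun h => (QuotientGroup.eq.mpr h).symm)
    fun h => QuotientGroup.eq.mpr ?_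
  change b⁻¹ * (ι * a) ∈ H
  rw [show b⁻¹ * (ι * a) = (ι * (a⁻¹ * b))⁻¹ by
    rw [mul_inv_rev, mul_inv_rev, inv_inv, hι, mul_assoc, hp.commute]]
  exact inv_mem h

lemma rPhi_proj_of_mem (hp : IsCMPair H H₀ ι) (hΦ : IsCMType H ι Φ) {φ : G ⧸ H} (hφ : φ ∈ Φ)
    (τ : G) : rPhi H H₀ hle Φ τ (proj H H₀ hle φ) = complIndicator Φ (τ⁻¹ • φ) := by
  have hfibre : (∃ ψ ∈ Φ, proj H H₀ hle ψ = proj H H₀ hle φ ∧ τ⁻¹ • ψ ∈ Φ) ↔ τ⁻¹ • φ ∈ Φ := by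
    refine ⟨fun ⟨ψ, hψ, hproj, hτψ⟩ => ?_, fun h => ⟨φ, hφ, rfl, h⟩⟩
    rcases hp.eq_or_eq_smul_of_proj_eq hle hproj.symm with rfl | rfl
    · exact hτψ
    · exact absurd hψ (hΦ.1 φ hφ)
  simp only [rPhi, hfibre, complIndicator]

lemma rPhi_proj (hp : IsCMPair H H₀ ι) (hΦ : IsCMType H ι Φ) (τ : G) (φ : G ⧸ H) :
    rPhi H H₀ hle Φ τ (proj H H₀ hle φ) = complIndicator Φ (τ⁻¹ • φ) + complIndicator Φ φ := by
  by_cases hφ : φ ∈ Φ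
  · simp [hp.rPhi_proj_of_mem hle hΦ hφ, complIndicator, hφ]
  · have hιφ : ι • φ ∈ Φ := (hΦ.smul_mem_iff φ).mpr hφ
    have hproj : proj H H₀ hle (ι • φ) = proj H H₀ hle φ := by
      rw [proj_smul, hp.smul_eq_self]
    rw [← hproj, hp.rPhi_proj_of_mem hle hΦ hιφ, smul_smul, hp.commute, mul_smul,
      hΦ.complIndicator_smul]
    simp [complIndicator, hφ]

lemma rPhi_mul (hp : IsCMPair H H₀ ι) (hΦ : IsCMType H ι Φ) (τ₁ τ₂ : G) :
    rPhi H H₀ hle Φ (τ₁ * τ₂) =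
      rPhi H H₀ hle Φ τ₁ + indAct H₀ τ₁ (rPhi H H₀ hle Φ τ₂) := by
  funext x
  obtain ⟨φ, rfl⟩ := proj_surjective hle x
  simp only [Pi.add_apply, indAct, ← proj_smul, hp.rPhi_proj hle hΦ, mul_inv_rev, mul_smul]
  ring_nf
  reduce_mod_char

lemma rPhi_proj_eq_ite (hp : IsCMPair H H₀ ι) (hΦ : IsCMType H ι Φ) {σ : G} {φ : G ⧸ H}
    (hσ : proj H H₀ hle (σ⁻¹ • φ) = proj H H₀ hle φ) :
    rPhi H H₀ hle Φ σ (proj H H₀ hle φ) = if σ⁻¹ • φ = φ then 0 else 1 := by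
  rw [hp.rPhi_proj hle hΦ]
  rcases hp.eq_or_eq_smul_of_proj_eq hle hσ.symm with h | h
  · rw [h, if_pos rfl, CharTwo.add_self_eq_zero]
  · have hne : ι • φ ≠ φ := fun h' => by
      simpa [h'] using hΦ.smul_mem_iff φ
    rw [h, if_neg hne, hΦ.complIndicator_smul, add_right_comm, CharTwo.add_self_eq_zero, zero_add]

end IsCMPair

lemma inv_smul_mk_eq_mk_iff {H : Subgroup G} (a t : G) :
    a⁻¹ • (t : G ⧸ H) = t ↔ t⁻¹ * a * t ∈ H := by
  change ((a⁻¹ * t : G) : G ⧸ H) = t ↔ _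
  rw [QuotientGroup.eq, mul_inv_rev, inv_inv]

end Group

section Field

variable {F E : Type*} [Field F] [Field E] [Algebra F E]

lemma AlgEquiv.apply_eq_or_eq_neg_of_sq_eq (g : E ≃ₐ[F] E) {s c : E} (hs : s ^ 2 = c)
    (hc : g c = c) : g s = s ∨ g s = -s :=
  sq_eq_sq_iff_eq_or_eq_neg.mp (by rw [← map_pow, hs, hc])

lemma IntermediateField.mem_fixingSubgroup_adjoin_simple_iff {s : E} {g : E ≃ₐ[F] E} :
    g ∈ F⟮s⟯.fixingSubgroup ↔ g s = s := by
  rw [← Subgroup.zpowers_le, ← le_iff_le, adjoin_simple_le_iff, mem_fixedField_iff]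
  refine ⟨fun h => h g (Subgroup.mem_zpowers g), fun h f hf => ?_⟩
  obtain ⟨n, rfl⟩ := Subgroup.mem_zpowers_iff.mp hf
  have hg : g ∈ MulAction.stabilizer (E ≃ₐ[F] E) s := h
  exact zpow_mem hg n

lemma IntermediateField.mem_fixingSubgroup_sup_adjoin_simple_iff {K₀ : IntermediateField F E}
    {s : E} {g : E ≃ₐ[F] E} (hg : g ∈ K₀.fixingSubgroup) :
    g ∈ (K₀ ⊔ F⟮s⟯).fixingSubgroup ↔ g s = s := by
  rw [fixingSubgroup_sup, Subgroup.mem_inf, mem_fixingSubgroup_adjoin_simple_iff, and_iff_right hg]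

lemma IntermediateField.conj_mem_fixingSubgroup_of_mem_normalClosure
    {K₀ : IntermediateField F E} {a : E ≃ₐ[F] E} (ha : a ∈ (normalClosure F K₀ E).fixingSubgroup)
    (t : E ≃ₐ[F] E) : t⁻¹ * a * t ∈ K₀.fixingSubgroup := by
  rw [mem_fixingSubgroup_iff] at ha ⊢
  intro y hy
  have hty : a (t y) = t y :=
    ha _ ((t.toAlgHom.comp K₀.val).fieldRange_le_normalClosure ⟨⟨y, hy⟩, rfl⟩)
  simp [AlgEquiv.mul_apply, hty]

end Field

lemma IsCMPair.of_sq_mem {F E : Type} [Field F] [Field E] [Algebra F E]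
    {K₀ : IntermediateField F E} {s : E} (hs : s ^ 2 ∈ K₀) {ι : E ≃ₐ[F] E}
    (hι2 : ι * ι = 1) (hcent : ∀ g : E ≃ₐ[F] E, g * ι = ι * g)
    (hιH : ι ∉ (K₀ ⊔ F⟮s⟯).fixingSubgroup) (hιH₀ : ι ∈ K₀.fixingSubgroup) :
    IsCMPair (K₀ ⊔ F⟮s⟯).fixingSubgroup K₀.fixingSubgroup ι := by
  have hsign : ∀ g ∈ K₀.fixingSubgroup, g s = s ∨ g s = -s := fun g hg =>
    g.apply_eq_or_eq_neg_of_sq_eq rfl ((mem_fixingSubgroup_iff _ _).mp hg _ hs)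
  have hιs : ι s = -s := (hsign ι hιH₀).resolve_left
    fun h => hιH ((mem_fixingSubgroup_sup_adjoin_simple_iff hιH₀).mpr h)
  refine ⟨hι2, hcent, hιH₀, fun g hg =>
    (hsign g hg).imp (mem_fixingSubgroup_sup_adjoin_simple_iff hg).mpr fun h => ?_⟩
  refine (mem_fixingSubgroup_sup_adjoin_simple_iff (mul_mem hιH₀ hg)).mpr ?_
  rw [AlgEquiv.mul_apply, h, map_neg, hιs, neg_neg]

lemma rmap_mk {Kc : Type} [Field Kc] [Algebra ℚ Kc] {K₀ : IntermediateField ℚ Kc} {d s : Kc}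
    (hd : d ∈ K₀) (hs : s ^ 2 = -d) (a t : Kc ≃ₐ[ℚ] Kc) :
    rmap K₀ d a t = if a (t s) = t s then 0 else 1 := by
  have hts : (t s) ^ 2 = -t d := by rw [← map_pow, hs, map_neg]
  refine if_congr ⟨fun h => h t rfl (t s) hts, fun h τ hτ r hr => ?_⟩ rfl rfl
  have hτd : t d = τ d := by
    have := (mem_fixingSubgroup_iff _ _).mp (QuotientGroup.eq.mp hτ) d hd
    rwa [AlgEquiv.mul_apply, AlgEquiv.aut_inv, AlgEquiv.symm_apply_eq] at this
  rcases sq_eq_sq_iff_eq_or_eq_neg.mp (hr.trans (hτd ▸ hts).symm) with rfl | rfl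
  · exact h
  · rw [map_neg, h]

theorem rPhi_cocycle_and_restriction_general
    (Kc : Type) [Field Kc] [NumberField Kc]
    (K₀ K : IntermediateField ℚ Kc)
    (hfixle : K.fixingSubgroup ≤ K₀.fixingSubgroup)
    (d : Kc) (hd : d ∈ K₀)
    (hKd : ∃ s : Kc, s ^ 2 = -d ∧ K = K₀ ⊔ IntermediateField.adjoin ℚ {s})
    -- the complex conjugation `ι`: a central element of order 2 of `G`, not fixing `K`
    (ι : Kc ≃ₐ[ℚ] Kc) (hι2 : ι * ι = 1)
    (hcent : ∀ g : Kc ≃ₐ[ℚ] Kc, g * ι = ι * g)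
    (hιH : ι ∉ K.fixingSubgroup) (hιH₀ : ι ∈ K₀.fixingSubgroup)
    -- a CM-type of `K`
    (Φ : Set ((Kc ≃ₐ[ℚ] Kc) ⧸ K.fixingSubgroup)) (hΦ : IsCMType K.fixingSubgroup ι Φ) :
    (∀ τ₁ τ₂ : Kc ≃ₐ[ℚ] Kc,
        rPhi K.fixingSubgroup K₀.fixingSubgroup hfixle Φ (τ₁ * τ₂) =
          rPhi K.fixingSubgroup K₀.fixingSubgroup hfixle Φ τ₁ +
            indAct K₀.fixingSubgroup τ₁
              (rPhi K.fixingSubgroup K₀.fixingSubgroup hfixle Φ τ₂)) ∧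
    (∀ a ∈ (IntermediateField.normalClosure ℚ ↥K₀ Kc).fixingSubgroup,
        rPhi K.fixingSubgroup K₀.fixingSubgroup hfixle Φ a = rmap K₀ d a) := by
  obtain ⟨s, hs, rfl⟩ := hKd
  have hp : IsCMPair (K₀ ⊔ adjoin ℚ {s}).fixingSubgroup K₀.fixingSubgroup ι :=
    .of_sq_mem (hs ▸ neg_mem hd) hι2 hcent hιH hιH₀
  refine ⟨hp.rPhi_mul hfixle hΦ, fun a ha => funext fun x => ?_⟩
  obtain ⟨t, rfl⟩ := QuotientGroup.mk_surjective x
  have hconj := conj_mem_fixingSubgroup_of_mem_normalClosure ha t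
  rw [rmap_mk hd hs, ← proj_mk hfixle t, hp.rPhi_proj_eq_ite hfixle hΦ
    (by rwa [proj_smul, proj_mk, inv_smul_mk_eq_mk_iff])]
  refine if_congr ?_ rfl rfl
  rw [inv_smul_mk_eq_mk_iff, mem_fixingSubgroup_sup_adjoin_simple_iff hconj, AlgEquiv.mul_apply,
    AlgEquiv.mul_apply, AlgEquiv.aut_inv, AlgEquiv.symm_apply_eq]

/-- For a CM-type `Φ` of `K`, the map `r_Φ : G → Ind` with
`r_Φ(τ)(φᵢH₀) = 0` iff `τ⁻¹φᵢ ∈ Φ` is a 1-cocycle, i.e.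
`r_Φ(τ₁τ₂) = r_Φ(τ₁) + τ₁·r_Φ(τ₂)` for all `τ₁, τ₂ ∈ G`, and its restriction to
`C = Gal(K^c/K₀^c)` equals the map `r`. -/
theorem rPhi_cocycle_and_restriction
    (Kc : Type) [Field Kc] [NumberField Kc] [IsGalois ℚ Kc]
    (K₀ K : IntermediateField ℚ Kc) (hle : K₀ ≤ K)
    (hfixle : K.fixingSubgroup ≤ K₀.fixingSubgroup)
    (htr : ∀ σ : Kc →+* ℂ, ∀ x ∈ K₀, (σ x).im = 0)
    (hti : ∀ σ : Kc →+* ℂ, ∃ x ∈ K, (σ x).im ≠ 0)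
    (hdeg : Module.finrank ℚ K = 2 * Module.finrank ℚ K₀)
    (hgal : IntermediateField.normalClosure ℚ ↥K Kc = ⊤)
    (d : Kc) (hd : d ∈ K₀)
    (hdpos : ∀ σ : Kc →+* ℂ, 0 < (σ d).re ∧ (σ d).im = 0)
    (hKd : ∃ s : Kc, s ^ 2 = -d ∧ K = K₀ ⊔ IntermediateField.adjoin ℚ {s})
    -- the complex conjugation `ι`: a central element of order 2 of `G`, not fixing `K`
    (ι : Kc ≃ₐ[ℚ] Kc) (hι2 : ι * ι = 1) (hι1 : ι ≠ 1)
    (hcent : ∀ g : Kc ≃ₐ[ℚ] Kc, g * ι = ι * g)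
    (hιH : ι ∉ K.fixingSubgroup) (hιH₀ : ι ∈ K₀.fixingSubgroup)
    -- a CM-type of `K`
    (Φ : Set ((Kc ≃ₐ[ℚ] Kc) ⧸ K.fixingSubgroup)) (hΦ : IsCMType K.fixingSubgroup ι Φ) :
    (∀ τ₁ τ₂ : Kc ≃ₐ[ℚ] Kc,
        rPhi K.fixingSubgroup K₀.fixingSubgroup hfixle Φ (τ₁ * τ₂) =
          rPhi K.fixingSubgroup K₀.fixingSubgroup hfixle Φ τ₁ +
            indAct K₀.fixingSubgroup τ₁
              (rPhi K.fixingSubgroup K₀.fixingSubgroup hfixle Φ τ₂)) ∧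
    (∀ a ∈ (IntermediateField.normalClosure ℚ ↥K₀ Kc).fixingSubgroup,
        rPhi K.fixingSubgroup K₀.fixingSubgroup hfixle Φ a = rmap K₀ d a) :=
  rPhi_cocycle_and_restriction_general Kc K₀ K hfixle d hd hKd ι hι2 hcent hιH hιH₀ Φ hΦ
end

section
/- Let Λ be a system of representatives for the conjugacy classes of the CM-types of K. Then the sum of the degrees over ℚ of the reflex fields K̃(Φ) for Φ ∈ Λ equals 2^N, i.e. Σ_{Φ∈Λ} [K̃(Φ) : ℚ] = 2^N. -/
/- Common combinatorial skeleton for the Galois-theoretic setting of the paper: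
`G = Gal(K^c/ℚ)`, `H = Gal(K^c/K)`, `H₀ = Gal(K^c/K₀)`, `ι` the complex conjugation.
Embeddings `K ↪ ℂ` correspond to left cosets `G ⧸ H`, embeddings `K₀ ↪ ℂ` to `G ⧸ H₀`. -/

open Pointwise

variable {G : Type} [Group G]

/-!
Under the Galois correspondence `[K̃(Φ) : ℚ] = [G : H̃(Φ)]`, and `H̃(Φ)` is the stabilizer of `Φ`
for the action of `G` on sets of cosets, so `[G : H̃(Φ)]` is the size of the orbit of `Φ`.
Since `ι` is central, `G` permutes the CM-types, and `Λ` meets each orbit exactly once: the sum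
counts all CM-types. Finally `ι` acts freely on the `2N` embeddings, so they fall into `N` pairs
`{φ, ιφ}`, and a CM-type is a choice of one member of each pair; there are `2 ^ N` of them.
-/

namespace Function.Involutive

variable {X : Type*} {e : X → X}

theorem card_eq_two_mul_ncard_of_preimage_eq_compl [Finite X] (he : Involutive e) {Φ₀ : Set X}
    (hΦ₀ : e ⁻¹' Φ₀ = Φ₀ᶜ) : Nat.card X = 2 * Φ₀.ncard := by
  have hcompl : Φ₀ᶜ.ncard = Φ₀.ncard := by
    rw [← hΦ₀, ← he.image_eq_preimage_symm, Set.ncard_image_of_injective _ he.injective]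
  rw [← Set.ncard_add_ncard_compl Φ₀, hcompl, two_mul]

theorem exists_preimage_eq_compl [Finite X] (he : Involutive e) (hfree : ∀ x, e x ≠ x) :
    ∃ Φ₀ : Set X, e ⁻¹' Φ₀ = Φ₀ᶜ := by
  let f := Finite.equivFin X
  refine ⟨{x | f x < f (e x)}, Set.ext fun x => ?_⟩
  have hne : f x ≠ f (e x) := fun h => hfree x (f.injective h).symm
  simp only [Set.mem_preimage, Set.mem_ofPred_eq, Set.mem_compl_iff, he x, not_lt]
  exact ⟨le_of_lt, fun h => lt_of_le_of_ne h hne.symm⟩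

/-- Sets `Φ` with `e⁻¹ Φ = Φᶜ` are determined by their trace on a fixed such set `Φ₀`, and every
subset of `Φ₀` occurs as a trace. -/
theorem ncard_setOf_preimage_eq_compl_eq_pow (he : Involutive e) {Φ₀ : Set X}
    (hΦ₀ : e ⁻¹' Φ₀ = Φ₀ᶜ) (hfin : Φ₀.Finite) :
    {Φ : Set X | e ⁻¹' Φ = Φᶜ}.ncard = 2 ^ Φ₀.ncard := by
  have h₀ : ∀ x, e x ∈ Φ₀ ↔ x ∉ Φ₀ := fun x => Set.ext_iff.mp hΦ₀ x
  rw [← Set.ncard_powerset Φ₀ hfin]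
  refine Set.ncard_congr (fun Φ _ => Φ ∩ Φ₀) (fun _ _ => Set.inter_subset_right) ?_ ?_
  · intro Φ Ψ hΦ hΨ hΦΨ
    have hΦ' : ∀ x, e x ∈ Φ ↔ x ∉ Φ := fun x => Set.ext_iff.mp hΦ x
    have hΨ' : ∀ x, e x ∈ Ψ ↔ x ∉ Ψ := fun x => Set.ext_iff.mp hΨ x
    have htrace : ∀ x ∈ Φ₀, x ∈ Φ ↔ x ∈ Ψ := fun x hx => by
      simpa [hx] using Set.ext_iff.mp hΦΨ x
    ext x
    by_cases hx : x ∈ Φ₀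
    · exact htrace x hx
    · have hex := htrace (e x) ((h₀ x).mpr hx)
      rw [hΦ', hΨ'] at hex
      exact not_iff_not.mp hex
  · intro T (hT : T ⊆ Φ₀)
    refine ⟨T ∪ e ⁻¹' (Φ₀ \ T), Set.ext fun x => ?_, Set.ext fun x => ?_⟩ <;>
      simp only [Set.mem_preimage, Set.mem_union, Set.mem_sdiff, Set.mem_compl_iff,
        Set.mem_inter_iff, he x] <;>
      grind [h₀ x, @hT x, @hT (e x)]

theorem ncard_setOf_preimage_eq_compl [Finite X] (he : Involutive e) (hfree : ∀ x, e x ≠ x)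
    {N : ℕ} (hX : Nat.card X = 2 * N) : {Φ : Set X | e ⁻¹' Φ = Φᶜ}.ncard = 2 ^ N := by
  obtain ⟨Φ₀, hΦ₀⟩ := he.exists_preimage_eq_compl hfree
  rw [he.ncard_setOf_preimage_eq_compl_eq_pow hΦ₀ (Set.toFinite Φ₀)]
  rw [he.card_eq_two_mul_ncard_of_preimage_eq_compl hΦ₀] at hX
  rw [Nat.eq_of_mul_eq_mul_left two_pos hX]

end Function.Involutive

namespace MulAction

variable {G Y : Type*} [Group G] [MulAction G Y]

theorem sum_index_stabilizer_eq_ncard {S : Set Y} (hS : S.Finite)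
    (hSinv : ∀ g : G, ∀ y ∈ S, g • y ∈ S) (Λ : Finset Y) (hΛS : ∀ y ∈ Λ, y ∈ S)
    (hΛrep : ∀ y ∈ S, ∃ z ∈ Λ, ∃ g : G, y = g • z)
    (hΛuniq : ∀ y ∈ Λ, ∀ z ∈ Λ, (∃ g : G, z = g • y) → y = z) :
    ∑ y ∈ Λ, (stabilizer G y).index = S.ncard := by
  have hcover : S = ⋃ y ∈ (Λ : Set Y), orbit G y := by
    ext x
    simp only [Set.mem_iUnion, Finset.mem_coe, exists_prop]
    constructor
    · intro hx
      obtain ⟨z, hz, g, rfl⟩ := hΛrep x hx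
      exact ⟨z, hz, g, rfl⟩
    · rintro ⟨z, hz, g, rfl⟩
      exact hSinv g z (hΛS z hz)
  have hdisj : (Λ : Set Y).PairwiseDisjoint (orbit G) := by
    intro y hy z hz hyz
    refine (orbit.eq_or_disjoint y z).resolve_left fun h => hyz ?_
    obtain ⟨g, hg⟩ := orbit_eq_iff.mp h.symm
    exact hΛuniq y hy z hz ⟨g, hg.symm⟩
  have hfin : ∀ y ∈ (Λ : Set Y), (orbit G y).Finite := fun y hy =>
    hS.subset (hcover ▸ Set.subset_biUnion_of_mem hy)
  rw [hcover, Λ.finite_toSet.ncard_biUnion hfin hdisj, finsum_mem_coe_finset]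
  exact Finset.sum_congr rfl fun y _ => index_stabilizer G y

theorem preimage_smul_eq_compl_of_commute {c g : G} (hcg : Commute c g) {Φ : Set Y}
    (hΦ : (c • ·) ⁻¹' Φ = Φᶜ) : (c • ·) ⁻¹' (g • Φ) = (g • Φ)ᶜ := by
  rw [Set.preimage_smul] at hΦ ⊢
  rw [smul_smul, (hcg.inv_left).eq, ← smul_smul, hΦ, Set.smul_set_compl]

end MulAction

theorem QuotientGroup.smul_ne_self_of_mem_center {G : Type*} [Group G] {H : Subgroup G} {c : G}
    (hc : c ∈ Subgroup.center G) (hcH : c ∉ H) (x : G ⧸ H) : c • x ≠ x := by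
  induction x using QuotientGroup.induction_on with
  | H g =>
    intro h
    have hmem : (c * g)⁻¹ * g ∈ H := QuotientGroup.eq.mp h
    rw [mul_inv_rev, mul_assoc, ← (Subgroup.mem_center_iff.mp (inv_mem hc) g), inv_mul_cancel_left]
      at hmem
    exact hcH (inv_mem_iff.mp hmem)

theorem Htilde_eq_stabilizer (H : Subgroup G) (Φ : Set (G ⧸ H)) :
    Htilde H Φ = MulAction.stabilizer G Φ := by
  ext σ
  have hSPhi : σ • SPhi H Φ = SPhi H (σ • Φ) := by
    ext g
    simp only [SPhi, Set.mem_smul_set_iff_inv_smul_mem, Set.mem_ofPred_eq, smul_eq_mul]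
    rfl
  rw [Htilde, MulAction.mem_stabilizer_iff, MulAction.mem_stabilizer_iff, hSPhi, SPhi, SPhi]
  exact Set.preimage_eq_preimage QuotientGroup.mk_surjective

theorem isCMType_iff_preimage_eq_compl (H : Subgroup G) (ι : G) (Φ : Set (G ⧸ H)) :
    IsCMType H ι Φ ↔ (ι • ·) ⁻¹' Φ = Φᶜ := by
  simp only [IsCMType, Set.ext_iff, Set.mem_preimage, Set.mem_compl_iff]
  grind

theorem sum_degrees_reflex_fields_general
    {G : Type} [Group G] [Finite G] (H : Subgroup G) (ι : G)
    (hι2 : ι * ι = 1) (hcent : ∀ g : G, g * ι = ι * g)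
    (hιH : ι ∉ H)
    (N : ℕ) (hN2 : Nat.card (G ⧸ H) = 2 * N)
    (Λ : Finset (Set (G ⧸ H)))
    (hΛCM : ∀ Φ ∈ Λ, IsCMType H ι Φ)
    (hΛrep : ∀ Φ : Set (G ⧸ H), IsCMType H ι Φ → ∃ Φ' ∈ Λ, ∃ τ : G, Φ = τ • Φ')
    (hΛuniq : ∀ Φ ∈ Λ, ∀ Φ' ∈ Λ, (∃ τ : G, Φ' = τ • Φ) → Φ = Φ') :
    ∑ Φ ∈ Λ, (Htilde H Φ).index = 2 ^ N := by
  have hinv : Function.Involutive (ι • · : G ⧸ H → G ⧸ H) := fun x => by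
    change ι • ι • x = x
    rw [smul_smul, hι2, one_smul]
  have hfree := QuotientGroup.smul_ne_self_of_mem_center (Subgroup.mem_center_iff.mpr hcent) hιH
  have hCMinv : ∀ g : G, ∀ Φ ∈ {Φ | IsCMType H ι Φ}, g • Φ ∈ {Φ | IsCMType H ι Φ} := by
    intro g Φ hΦ
    rw [Set.mem_ofPred_eq, isCMType_iff_preimage_eq_compl] at hΦ ⊢
    exact MulAction.preimage_smul_eq_compl_of_commute (hcent g).symm hΦ
  simp_rw [Htilde_eq_stabilizer]
  rw [MulAction.sum_index_stabilizer_eq_ncard (Set.toFinite _) hCMinv Λ hΛCM hΛrep hΛuniq]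
  simp_rw [isCMType_iff_preimage_eq_compl]
  exact hinv.ncard_setOf_preimage_eq_compl hfree hN2

/-- If `Λ` is a system of representatives for the conjugacy classes of the
CM-types of `K` (where `[K : ℚ] = 2N`), then the sum of the degrees over `ℚ` of the reflex
fields `K̃(Φ)`, `Φ ∈ Λ`, equals `2^N`.  By the Galois correspondence,
`[K̃(Φ) : ℚ] = [G : H̃(Φ)]`, the index of `H̃(Φ)` in `G`. -/
theorem sum_degrees_reflex_fields
    {G : Type} [Group G] [Finite G] (H H₀ : Subgroup G) (hle : H ≤ H₀) (ι : G)
    (hι2 : ι * ι = 1) (hι1 : ι ≠ 1) (hcent : ∀ g : G, g * ι = ι * g)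
    (hιH : ι ∉ H) (hιH₀ : ι ∈ H₀)
    (hcosets : ∀ g : G, g ∈ H₀ ↔ g ∈ H ∨ ι * g ∈ H)
    (hfaithful : H.normalCore = ⊥)
    (N : ℕ) (hN : Nat.card (G ⧸ H₀) = N) (hN2 : Nat.card (G ⧸ H) = 2 * N)
    (Λ : Finset (Set (G ⧸ H)))
    (hΛCM : ∀ Φ ∈ Λ, IsCMType H ι Φ)
    (hΛrep : ∀ Φ : Set (G ⧸ H), IsCMType H ι Φ → ∃ Φ' ∈ Λ, ∃ τ : G, Φ = τ • Φ')
    (hΛuniq : ∀ Φ ∈ Λ, ∀ Φ' ∈ Λ, (∃ τ : G, Φ' = τ • Φ) → Φ = Φ') :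
    ∑ Φ ∈ Λ, (Htilde H Φ).index = 2 ^ N :=
  sum_degrees_reflex_fields_general H ι hι2 hcent hιH N hN2 Λ hΛCM hΛrep hΛuniq
end

section
/- Let M be a G-module on which the complex conjugation ι acts as −1, and let Λ be a system of representatives for the conjugacy classes of the CM-types of K. Then the composition of the map (N_Φ)_{Φ∈Λ} : M^H → ⊕_{Φ∈Λ} M^{H̃(Φ)}, a ↦ (Σ_{φ∈Φ} φ(a))_{Φ∈Λ}, followed by the map Σ_{Φ∈Λ} N_{Φ*} : ⊕_{Φ∈Λ} M^{H̃(Φ)} → M^H, (b_Φ) ↦ Σ_{Φ∈Λ} Σ_{ψ∈Φ*} ψ(b_Φ), equals multiplication by 2^{N−1} on M^H. -/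
/- Common combinatorial skeleton for the Galois-theoretic setting of the paper:
`G = Gal(K^c/ℚ)`, `H = Gal(K^c/K)`, `H₀ = Gal(K^c/K₀)`, `ι` the complex conjugation.
Embeddings `K ↪ ℂ` correspond to left cosets `G ⧸ H`, embeddings `K₀ ↪ ℂ` to `G ⧸ H₀`. -/

open Pointwise
open scoped Classical

variable {G : Type} [Group G]

/-- The half norm map `N_Φ : M^H → M^{H̃(Φ)}`, `a ↦ ∑_{φ ∈ Φ} φ(a)`, where each embedding
`φ ∈ Φ ⊆ G ⧸ H` acts on `M^H` through a coset representative. -/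
noncomputable def halfNorm {G : Type} [Group G] (H : Subgroup G) {M : Type} [AddCommMonoid M]
    [DistribMulAction G M] (Φ : Set (G ⧸ H)) (a : M) : M :=
  ∑ᶠ φ ∈ Φ, (Quotient.out φ : G) • a

/-- The dual half norm map `N_{Φ*} : M^{H̃(Φ)} → M^H`, `b ↦ ∑_{ψ ∈ Φ*} ψ(b)`, where the dual
CM-type `Φ*` consists of the inverses of representatives of the right cosets `H̃(Φ)\S_Φ`. -/
noncomputable def dualHalfNorm {G : Type} [Group G] (H : Subgroup G) {M : Type}
    [AddCommMonoid M] [DistribMulAction G M] (Φ : Set (G ⧸ H)) (b : M) : M :=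
  ∑ᶠ c : Quotient (QuotientGroup.rightRel (Htilde H Φ)),
    if Quotient.out c ∈ SPhi H Φ then (Quotient.out c)⁻¹ • b else 0

/-!
For `a ∈ M^H` write `y(a)` for the action of a coset `y ∈ G/H` on `a`. Unfolding both sums,
`N_{Φ*} N_Φ a = ∑_y c_Φ(y) • y(a)`, where `c_Φ(y)` counts the right `H̃(Φ)`-cosets `c ⊆ S_Φ`
with `c y ∈ Φ`. As `M` may have torsion, these coefficients are compared in `ℕ`: by
orbit–stabilizer, `|G| · ∑_{Φ∈Λ} c_Φ(y)` is the number of pairs `(g, Ψ)` with `Ψ` a CM-type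
containing both `gH` and `g y`. For `y = 1` this is `|G|` times half of the `2^N` CM-types, for
`y = ι` it is `0`, and otherwise exchanging `g y` and `ι g y` in `Ψ` shows that `y` and `ι y`
get the same coefficient; since `(ι y)(a) = -y(a)`, those terms cancel in pairs.
-/

open Finset

section RightCosets

variable [Fintype G] (K : Subgroup G)

lemma card_filter_mk_rightRel_eq (c : Quotient (QuotientGroup.rightRel K)) :
    #{g : G | Quotient.mk'' g = c} = Nat.card K := by
  rw [← Fintype.card_subtype, ← Nat.card_eq_fintype_card]
  refine Nat.card_congr
    { toFun := fun g => ⟨g.1 * c.out⁻¹, ?_⟩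
      invFun := fun k => ⟨k.1 * c.out, ?_⟩
      left_inv := fun g => by simp
      right_inv := fun k => by simp }
  · have := QuotientGroup.rightRel_apply.1 (Quotient.exact' (g.2.trans (Quotient.out_eq' c).symm))
    simpa using K.inv_mem this
  · conv_rhs => rw [← Quotient.out_eq' c]
    exact Quotient.sound' (QuotientGroup.rightRel_apply.2 (by simp [k.2]))

lemma sum_eq_card_nsmul_sum_quotient_rightRel {M : Type*} [AddCommMonoid M] {f : G → M}
    (hf : ∀ k ∈ K, ∀ g, f (k * g) = f g) :
    ∑ g, f g = Nat.card K • ∑ c : Quotient (QuotientGroup.rightRel K), f c.out := by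
  have hf' : ∀ g, f g = f (Quotient.mk'' g : Quotient (QuotientGroup.rightRel K)).out := by
    intro g
    have := QuotientGroup.rightRel_apply.1 (Quotient.exact' (Quotient.out_eq' (Quotient.mk'' g :
      Quotient (QuotientGroup.rightRel K))).symm)
    rw [← hf _ this g, inv_mul_cancel_right]
  rw [Finset.sum_congr rfl fun g _ => hf' g, ← Finset.sum_fiberwise' univ Quotient.mk''
    fun c : Quotient (QuotientGroup.rightRel K) => f c.out,
    Finset.smul_sum]
  simp_rw [Finset.sum_const, card_filter_mk_rightRel_eq]

end RightCosets

lemma sum_eq_sum_ncard_orbit_nsmul [Fintype G] {X M : Type*} [MulAction G X] [AddCommMonoid M]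
    {F : X → M} (hF : ∀ (g : G) x, F (g • x) = F x) {S Λ : Finset X}
    (hS : ∀ x, x ∈ S ↔ ∃ φ ∈ Λ, ∃ g : G, x = g • φ)
    (hΛ : ∀ φ ∈ Λ, ∀ φ' ∈ Λ, (∃ g : G, φ' = g • φ) → φ = φ') :
    ∑ x ∈ S, F x = ∑ φ ∈ Λ, (MulAction.orbit G φ).ncard • F φ := by
  have horbit : ∀ φ : X, MulAction.orbit G φ = ↑(univ.image fun g : G => g • φ) := by
    simp [MulAction.orbit]
  have hSorbits : S = Λ.biUnion fun φ => univ.image fun g : G => g • φ := by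
    ext x
    simp [hS, eq_comm]
  rw [hSorbits, Finset.sum_biUnion]
  · refine Finset.sum_congr rfl fun φ _ => ?_
    rw [horbit, Set.ncard_coe_finset, ← Finset.sum_const]
    refine Finset.sum_congr rfl fun x hx => ?_
    obtain ⟨g, -, rfl⟩ := Finset.mem_image.1 hx
    exact hF g φ
  · intro φ hφ φ' hφ' hne
    refine Finset.disjoint_left.2 fun x hx hx' => hne (hΛ φ hφ φ' hφ' ?_)
    obtain ⟨g, -, rfl⟩ := Finset.mem_image.1 hx
    obtain ⟨g', -, hg'⟩ := Finset.mem_image.1 hx'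
    exact ⟨g'⁻¹ * g, by rw [mul_smul, ← hg', inv_smul_smul]⟩

lemma sum_nsmul_eq_of_involutive {X M : Type*} [Fintype X] [AddCommGroup M] {σ : X → X}
    (hσ : Function.Involutive σ) (hfix : ∀ x, σ x ≠ x) {v : X → M} (hv : ∀ x, v (σ x) = -v x)
    {c : X → ℕ} {x₀ : X} (hc : ∀ x, x ≠ x₀ → x ≠ σ x₀ → c (σ x) = c x) (hc₀ : c (σ x₀) = 0) :
    ∑ x, c x • v x = c x₀ • v x₀ := by
  classical
  rw [← Finset.sum_sdiff (Finset.subset_univ {x₀, σ x₀}), Finset.sum_pair (hfix x₀).symm, hc₀,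
    zero_smul, add_zero, add_eq_right]
  refine Finset.sum_involution (fun x _ => σ x) (fun x hx => ?_) (fun x _ _ => hfix x)
    (fun x hx => ?_) (fun x _ => hσ x)
  all_goals simp only [Finset.mem_sdiff, Finset.mem_univ, Finset.mem_insert,
    Finset.mem_singleton, true_and, not_or] at hx ⊢
  · rw [hc x hx.1 hx.2, hv, smul_neg, add_neg_cancel]
  · exact ⟨fun h => hx.2 (by rw [← h, hσ]), fun h => hx.1 (hσ.injective h)⟩

section CosetAction

variable {H : Subgroup G} {M : Type*} [AddCommMonoid M] [DistribMulAction G M] {a : M}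

lemma smul_eq_smul_of_mk_eq (ha : ∀ h ∈ H, h • a = a) {g g' : G}
    (hgg' : (g : G ⧸ H) = g') : g • a = g' • a := by
  rw [← mul_inv_cancel_left g g', mul_smul, ha _ (QuotientGroup.eq.mp hgg')]

lemma out_smul_mk (ha : ∀ h ∈ H, h • a = a) (g : G) : (g : G ⧸ H).out • a = g • a :=
  smul_eq_smul_of_mk_eq ha (QuotientGroup.out_eq' _)

lemma out_smul_smul (ha : ∀ h ∈ H, h • a = a) (g : G) (x : G ⧸ H) :
    (g • x).out • a = g • x.out • a := by
  rw [← MulAction.Quotient.mk_smul_out, out_smul_mk ha, smul_eq_mul, mul_smul]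

end CosetAction

lemma iota_smul_iota_smul {X : Type*} [MulAction G X] {ι : G} (hι2 : ι * ι = 1) (x : X) :
    ι • ι • x = x := by
  rw [smul_smul, hι2, one_smul]

lemma iota_smul_ne_self {H : Subgroup G} {ι : G} (hcent : ∀ g : G, g * ι = ι * g)
    (hιH : ι ∉ H) (x : G ⧸ H) : ι • x ≠ x := by
  induction x using QuotientGroup.induction_on with
  | H g =>
    rw [MulAction.Quotient.smul_mk, smul_eq_mul, Ne, QuotientGroup.eq, ← hcent, mul_inv_rev,
      inv_mul_cancel_right, inv_mem_iff]
    exact hιH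

lemma smul_iota_smul {X : Type*} [MulAction G X] {ι : G} (hcent : ∀ g : G, g * ι = ι * g)
    (g : G) (x : X) : g • ι • x = ι • g • x := by
  rw [smul_smul, smul_smul, hcent]

section CMTypes

variable {H : Subgroup G} {ι : G}

lemma isCMType_iff (hι2 : ι * ι = 1) {Φ : Set (G ⧸ H)} :
    IsCMType H ι Φ ↔ ∀ x, x ∈ Φ ↔ ι • x ∉ Φ := by
  refine ⟨fun hΦ x => ⟨hΦ.1 x, (hΦ.2 x).resolve_right⟩,
    fun hΦ => ⟨fun x => (hΦ x).1, fun x => or_iff_not_imp_left.2 fun hx => ?_⟩⟩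
  exact (hΦ (ι • x)).2 (by rwa [iota_smul_iota_smul hι2])

lemma IsCMType.smul (hcent : ∀ g : G, g * ι = ι * g) {Φ : Set (G ⧸ H)} (hΦ : IsCMType H ι Φ)
    (τ : G) : IsCMType H ι (τ • Φ) := by
  simp only [IsCMType, Set.mem_smul_set_iff_inv_smul_mem, smul_iota_smul hcent]
  exact ⟨fun x => hΦ.1 _, fun x => hΦ.2 _⟩

lemma IsCMType.symmDiff_pair (hι2 : ι * ι = 1) {Ψ : Set (G ⧸ H)} (hΨ : IsCMType H ι Ψ)
    (v : G ⧸ H) : IsCMType H ι (symmDiff Ψ {v, ι • v}) := by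
  rw [isCMType_iff hι2] at hΨ ⊢
  intro x
  have hxv : ι • x = v ↔ x = ι • v := by
    constructor <;> rintro rfl <;> simp [iota_smul_iota_smul hι2]
  simp only [Set.mem_symmDiff, Set.mem_insert_iff, Set.mem_singleton_iff, smul_left_cancel_iff,
    hxv]
  have := hΨ x
  tauto

lemma exists_isCMType [Finite (G ⧸ H)] (hι2 : ι * ι = 1) (hfree : ∀ x : G ⧸ H, ι • x ≠ x) :
    ∃ Φ, IsCMType H ι Φ := by
  have : Fintype (G ⧸ H) := Fintype.ofFinite _
  let e := Fintype.equivFin (G ⧸ H)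
  refine ⟨{x | e x < e (ι • x)}, (isCMType_iff hι2).2 fun x => ?_⟩
  simp only [Set.mem_ofPred_eq, iota_smul_iota_smul hι2, not_lt]
  exact ⟨le_of_lt, fun h => h.lt_of_ne (e.injective.ne (hfree x).symm)⟩

lemma IsCMType.two_mul_ncard [Finite (G ⧸ H)] (hι2 : ι * ι = 1) {Φ : Set (G ⧸ H)}
    (hΦ : IsCMType H ι Φ) : 2 * Φ.ncard = Nat.card (G ⧸ H) := by
  have hcompl : ι • Φ = Φᶜ := by
    ext x
    rw [Set.mem_smul_set_iff_inv_smul_mem, inv_eq_of_mul_eq_one_right hι2, Set.mem_compl_iff,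
      (isCMType_iff hι2).1 hΦ x, not_not]
  rw [two_mul]
  nth_rewrite 2 [← Set.ncard_smul_set ι Φ]
  rw [hcompl, Set.ncard_add_ncard_compl]

lemma ncard_setOf_isCMType [Finite (G ⧸ H)] (hι2 : ι * ι = 1)
    (hfree : ∀ x : G ⧸ H, ι • x ≠ x) {N : ℕ} (hN2 : Nat.card (G ⧸ H) = 2 * N) :
    {Ψ | IsCMType H ι Ψ}.ncard = 2 ^ N := by
  obtain ⟨Φ₀, hΦ₀⟩ := exists_isCMType hι2 hfree
  have hN : Φ₀.ncard = N := by have := hΦ₀.two_mul_ncard hι2; omega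
  rw [isCMType_iff hι2] at hΦ₀
  rw [← hN, ← Set.ncard_powerset]
  symm
  -- A CM-type `Ψ` is recovered from `T = Ψ ∩ Φ₀` as `T` together with the conjugates of `Φ₀ \ T`.
  refine Set.ncard_congr (fun T _ => T ∪ {y | ι • y ∈ Φ₀ \ T}) (fun T hT => ?_)
    (fun T T' hT hT' hTT' => ?_) (fun Ψ hΨ => ⟨Ψ ∩ Φ₀, Set.inter_subset_right, ?_⟩)
  · refine (isCMType_iff hι2).2 fun x => ?_
    simp only [Set.mem_union, Set.mem_ofPred_eq, Set.mem_sdiff, iota_smul_iota_smul hι2]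
    have := hΦ₀ x
    have := @hT x
    have := @hT (ι • x)
    tauto
  · ext x
    have := congrArg (x ∈ ·) hTT'
    simp only [Set.mem_union, Set.mem_ofPred_eq, Set.mem_sdiff, eq_iff_iff] at this
    have := hΦ₀ x
    have := @hT x
    have := @hT' x
    tauto
  · rw [Set.mem_ofPred_eq, isCMType_iff hι2] at hΨ
    ext x
    simp only [Set.mem_union, Set.mem_ofPred_eq, Set.mem_sdiff, Set.mem_inter_iff]
    have := hΦ₀ x
    have := hΨ x
    tauto

end CMTypes

section Htilde

variable {H : Subgroup G}

lemma sPhi_smul (σ : G) (Φ : Set (G ⧸ H)) : SPhi H (σ • Φ) = σ • SPhi H Φ := by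
  ext g
  rw [Set.mem_smul_set_iff_inv_smul_mem]
  exact Set.mem_smul_set_iff_inv_smul_mem

lemma sPhi_injective : Function.Injective (SPhi H) :=
  Set.preimage_injective.2 QuotientGroup.mk_surjective

lemma htilde_eq_stabilizer (Φ : Set (G ⧸ H)) : Htilde H Φ = MulAction.stabilizer G Φ := by
  ext σ
  rw [Htilde, MulAction.mem_stabilizer_iff, MulAction.mem_stabilizer_iff, ← sPhi_smul,
    sPhi_injective.eq_iff]

lemma smul_mem_iff_of_mem_htilde {Φ : Set (G ⧸ H)} {σ : G} (hσ : σ ∈ Htilde H Φ)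
    (x : G ⧸ H) : σ • x ∈ Φ ↔ x ∈ Φ := by
  rw [htilde_eq_stabilizer, MulAction.mem_stabilizer_iff] at hσ
  conv_lhs => rw [← hσ]
  exact Set.smul_mem_smul_set_iff

lemma ncard_orbit_mul_card_htilde (Φ : Set (G ⧸ H)) :
    (MulAction.orbit G Φ).ncard * Nat.card (Htilde H Φ) = Nat.card G := by
  rw [htilde_eq_stabilizer, ← MulAction.index_stabilizer, mul_comm, Subgroup.card_mul_index]

end Htilde

section Counting

variable [Fintype G] {H : Subgroup G} {ι : G}

variable (H ι) in
noncomputable def cmTypes : Finset (Set (G ⧸ H)) := {Ψ | IsCMType H ι Ψ}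

lemma mem_cmTypes {Ψ : Set (G ⧸ H)} : Ψ ∈ cmTypes H ι ↔ IsCMType H ι Ψ := by
  simp [cmTypes]

lemma card_cmTypes (hι2 : ι * ι = 1) (hfree : ∀ x : G ⧸ H, ι • x ≠ x) {N : ℕ}
    (hN2 : Nat.card (G ⧸ H) = 2 * N) : #(cmTypes H ι) = 2 ^ N := by
  rw [← Set.ncard_coe_finset, ← ncard_setOf_isCMType hι2 hfree hN2]
  congr
  ext Ψ
  exact mem_cmTypes

lemma card_cmTypes_filter_mem_eq (hι2 : ι * ι = 1) (v : G ⧸ H) (P : Set (G ⧸ H) → Prop)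
    (hP : ∀ Ψ, P (symmDiff Ψ {v, ι • v}) ↔ P Ψ) :
    #{Ψ ∈ cmTypes H ι | P Ψ ∧ v ∈ Ψ} = #{Ψ ∈ cmTypes H ι | P Ψ ∧ ι • v ∈ Ψ} := by
  have hswap (Ψ : Set (G ⧸ H)) : symmDiff (symmDiff Ψ {v, ι • v}) {v, ι • v} = Ψ :=
    symmDiff_symmDiff_cancel_right _ _
  refine Finset.card_nbij' (symmDiff · {v, ι • v}) (symmDiff · {v, ι • v}) ?_ ?_
    (fun Ψ _ => hswap Ψ) (fun Ψ _ => hswap Ψ)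
  all_goals
    intro Ψ hΨ
    simp only [coe_filter, mem_cmTypes, Set.mem_ofPred_eq] at hΨ ⊢
    obtain ⟨hcm, hp, hv⟩ := hΨ
    refine ⟨hcm.symmDiff_pair hι2 v, (hP Ψ).2 hp, ?_⟩
    have := (isCMType_iff hι2).1 hcm v
    simp only [Set.mem_symmDiff, Set.mem_insert_iff, Set.mem_singleton_iff]
    tauto

lemma two_mul_card_cmTypes_filter_mem (hι2 : ι * ι = 1) (v : G ⧸ H) :
    2 * #{Ψ ∈ cmTypes H ι | v ∈ Ψ} = #(cmTypes H ι) := by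
  have hswap := card_cmTypes_filter_mem_eq hι2 v (fun _ => True) fun _ => Iff.rfl
  simp only [true_and] at hswap
  have hnot : #{Ψ ∈ cmTypes H ι | ι • v ∈ Ψ} = #{Ψ ∈ cmTypes H ι | v ∉ Ψ} := by
    refine congrArg card (Finset.filter_congr fun Ψ hΨ => ?_)
    rw [(isCMType_iff hι2).1 (mem_cmTypes.1 hΨ) v, not_not]
  rw [two_mul]
  nth_rewrite 2 [hswap]
  rw [hnot, Finset.card_filter_add_card_filter_not]

end Counting

section HalfNorms

variable [Fintype G] {H : Subgroup G} {M : Type} [AddCommMonoid M] [DistribMulAction G M]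
  {a : M}

lemma halfNorm_eq_sum (Φ : Set (G ⧸ H)) (a : M) :
    halfNorm H Φ a = ∑ x, if x ∈ Φ then x.out • a else 0 := by
  rw [halfNorm, finsum_mem_def, finsum_eq_sum_of_fintype]
  rfl

lemma smul_halfNorm (ha : ∀ h ∈ H, h • a = a) (g : G) (Φ : Set (G ⧸ H)) :
    g • halfNorm H Φ a = halfNorm H (g • Φ) a := by
  simp only [halfNorm_eq_sum, Finset.smul_sum, smul_ite, smul_zero, ← out_smul_smul ha]
  refine Fintype.sum_equiv (MulAction.toPerm g) _ _ fun x => ?_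
  simp [Set.smul_mem_smul_set_iff]

noncomputable def dualCount (Φ : Set (G ⧸ H)) (y : G ⧸ H) : ℕ :=
  #{c : Quotient (QuotientGroup.rightRel (Htilde H Φ)) | c.out ∈ SPhi H Φ ∧ c.out • y ∈ Φ}

lemma dualHalfNorm_halfNorm (ha : ∀ h ∈ H, h • a = a) (Φ : Set (G ⧸ H)) :
    dualHalfNorm H Φ (halfNorm H Φ a) = ∑ y, dualCount Φ y • y.out • a := by
  rw [dualHalfNorm, finsum_eq_sum_of_fintype]
  simp_rw [smul_halfNorm ha, halfNorm_eq_sum, Set.mem_inv_smul_set_iff]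
  calc _ = ∑ c : Quotient (QuotientGroup.rightRel (Htilde H Φ)), ∑ y : G ⧸ H,
        if c.out ∈ SPhi H Φ ∧ c.out • y ∈ Φ then y.out • a else 0 := by
        refine Finset.sum_congr rfl fun c _ => ?_
        split_ifs with hc <;> simp [hc]
    _ = _ := by
        rw [Finset.sum_comm]
        simp_rw [← Finset.sum_filter, Finset.sum_const]
        rfl

end HalfNorms

structure IsCMTypeReps (H : Subgroup G) (ι : G) (Λ : Finset (Set (G ⧸ H))) : Prop where
  isCMType : ∀ Φ ∈ Λ, IsCMType H ι Φ
  exists_eq_smul : ∀ Φ, IsCMType H ι Φ → ∃ Φ' ∈ Λ, ∃ τ : G, Φ = τ • Φ'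
  eq_of_eq_smul : ∀ Φ ∈ Λ, ∀ Φ' ∈ Λ, (∃ τ : G, Φ' = τ • Φ) → Φ = Φ'

section PairCount

variable [Fintype G] {H : Subgroup G} {ι : G}

noncomputable def pairCount (Φ : Set (G ⧸ H)) (y : G ⧸ H) : ℕ :=
  #{g : G | (g : G ⧸ H) ∈ Φ ∧ g • y ∈ Φ}

lemma pairCount_eq_card_mul_dualCount (Φ : Set (G ⧸ H)) (y : G ⧸ H) :
    pairCount Φ y = Nat.card (Htilde H Φ) * dualCount Φ y := by
  simp only [pairCount, dualCount, Finset.card_filter]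
  rw [sum_eq_card_nsmul_sum_quotient_rightRel (Htilde H Φ), smul_eq_mul]
  · rfl
  · intro k hk g
    have hkg : ((k * g : G) : G ⧸ H) = k • (g : G ⧸ H) := rfl
    simp only [hkg, mul_smul, smul_mem_iff_of_mem_htilde hk]

lemma pairCount_smul (τ : G) (Φ : Set (G ⧸ H)) (y : G ⧸ H) :
    pairCount (τ • Φ) y = pairCount Φ y :=
  Finset.card_equiv (Equiv.mulLeft τ⁻¹) fun g => by
    simp [Set.mem_smul_set_iff_inv_smul_mem, mul_smul]

lemma card_mul_sum_dualCount (hcent : ∀ g : G, g * ι = ι * g) {Λ : Finset (Set (G ⧸ H))}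
    (hΛ : IsCMTypeReps H ι Λ) (y : G ⧸ H) :
    Nat.card G * ∑ Φ ∈ Λ, dualCount Φ y =
      ∑ g : G, #{Ψ ∈ cmTypes H ι | (g : G ⧸ H) ∈ Ψ ∧ g • y ∈ Ψ} := by
  have hcm (Ψ : Set (G ⧸ H)) : Ψ ∈ cmTypes H ι ↔ ∃ Φ ∈ Λ, ∃ τ : G, Ψ = τ • Φ := by
    rw [mem_cmTypes]
    exact ⟨hΛ.exists_eq_smul Ψ, fun ⟨Φ, hΦ, τ, hΨ⟩ => hΨ ▸ (hΛ.isCMType Φ hΦ).smul hcent τ⟩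
  calc Nat.card G * ∑ Φ ∈ Λ, dualCount Φ y
      = ∑ Φ ∈ Λ, (MulAction.orbit G Φ).ncard • pairCount Φ y := by
        rw [Finset.mul_sum]
        refine Finset.sum_congr rfl fun Φ _ => ?_
        rw [pairCount_eq_card_mul_dualCount, smul_eq_mul, ← mul_assoc,
          ncard_orbit_mul_card_htilde]
    _ = ∑ Ψ ∈ cmTypes H ι, pairCount Ψ y :=
        (sum_eq_sum_ncard_orbit_nsmul (fun τ Ψ => pairCount_smul τ Ψ y) hcm
          hΛ.eq_of_eq_smul).symm
    _ = _ := Finset.sum_card_bipartiteAbove_eq_sum_card_bipartiteBelow _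

end PairCount

section Evaluation

variable [Fintype G] {H : Subgroup G} {ι : G} {Λ : Finset (Set (G ⧸ H))}

lemma sum_dualCount_one (hι2 : ι * ι = 1) (hcent : ∀ g : G, g * ι = ι * g)
    (hfree : ∀ x : G ⧸ H, ι • x ≠ x) {N : ℕ} (hN2 : Nat.card (G ⧸ H) = 2 * N)
    (hΛ : IsCMTypeReps H ι Λ) : ∑ Φ ∈ Λ, dualCount Φ ((1 : G) : G ⧸ H) = 2 ^ (N - 1) := by
  obtain ⟨n, rfl⟩ : ∃ n, N = n + 1 :=
    ⟨N - 1, by have := Nat.card_pos (α := G ⧸ H); omega⟩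
  have hhalf (v : G ⧸ H) : #{Ψ ∈ cmTypes H ι | v ∈ Ψ} = 2 ^ n := by
    have := two_mul_card_cmTypes_filter_mem hι2 v
    rw [card_cmTypes hι2 hfree hN2, pow_succ] at this
    omega
  apply Nat.eq_of_mul_eq_mul_left (Nat.card_pos (α := G))
  rw [card_mul_sum_dualCount hcent hΛ]
  simp [hhalf]

lemma sum_dualCount_iota_smul_one (hcent : ∀ g : G, g * ι = ι * g)
    (hΛ : IsCMTypeReps H ι Λ) : ∑ Φ ∈ Λ, dualCount Φ (ι • ((1 : G) : G ⧸ H)) = 0 := by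
  apply Nat.eq_of_mul_eq_mul_left (Nat.card_pos (α := G))
  rw [card_mul_sum_dualCount hcent hΛ, mul_zero]
  refine Finset.sum_eq_zero fun g _ => Finset.card_eq_zero.2 <|
    Finset.filter_eq_empty_iff.2 fun Ψ hΨ ⟨hg, hιg⟩ => (mem_cmTypes.1 hΨ).1 _ hg ?_
  rwa [smul_iota_smul hcent, MulAction.Quotient.smul_coe, smul_eq_mul, mul_one] at hιg

lemma sum_dualCount_iota_smul (hι2 : ι * ι = 1) (hcent : ∀ g : G, g * ι = ι * g)
    (hΛ : IsCMTypeReps H ι Λ) {y : G ⧸ H} (hy1 : y ≠ ((1 : G) : G ⧸ H))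
    (hyι : y ≠ ι • ((1 : G) : G ⧸ H)) :
    ∑ Φ ∈ Λ, dualCount Φ (ι • y) = ∑ Φ ∈ Λ, dualCount Φ y := by
  apply Nat.eq_of_mul_eq_mul_left (Nat.card_pos (α := G))
  rw [card_mul_sum_dualCount hcent hΛ, card_mul_sum_dualCount hcent hΛ]
  refine Finset.sum_congr rfl fun g _ => ?_
  rw [smul_iota_smul hcent]
  refine (card_cmTypes_filter_mem_eq hι2 (g • y) ((g : G ⧸ H) ∈ ·) fun Ψ => ?_).symm
  have hg : (g : G ⧸ H) = g • ((1 : G) : G ⧸ H) := by simp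
  have h1 : (g : G ⧸ H) ≠ g • y := fun h => hy1 (smul_left_cancel g (h.symm.trans hg))
  have h2 : (g : G ⧸ H) ≠ ι • g • y := fun h => hyι <| smul_left_cancel g <| by
    rw [smul_iota_smul hcent, ← hg, h, iota_smul_iota_smul hι2]
  simp [Set.mem_symmDiff, h1, h2]

end Evaluation

theorem halfnorm_composition_two_pow_general
    {G : Type} [Group G] [Finite G] (H : Subgroup G) (ι : G)
    (hι2 : ι * ι = 1) (hcent : ∀ g : G, g * ι = ι * g)
    (hιH : ι ∉ H)
    (N : ℕ) (hN2 : Nat.card (G ⧸ H) = 2 * N)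
    (Λ : Finset (Set (G ⧸ H)))
    (hΛCM : ∀ Φ ∈ Λ, IsCMType H ι Φ)
    (hΛrep : ∀ Φ : Set (G ⧸ H), IsCMType H ι Φ → ∃ Φ' ∈ Λ, ∃ τ : G, Φ = τ • Φ')
    (hΛuniq : ∀ Φ ∈ Λ, ∀ Φ' ∈ Λ, (∃ τ : G, Φ' = τ • Φ) → Φ = Φ')
    (M : Type) [AddCommGroup M] [DistribMulAction G M]
    (hιM : ∀ m : M, ι • m = -m) :
    ∀ a : M, (∀ h ∈ H, h • a = a) →
      ∑ Φ ∈ Λ, dualHalfNorm H Φ (halfNorm H Φ a) = 2 ^ (N - 1) • a := by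
  intro a ha
  have := Fintype.ofFinite G
  have hfree := iota_smul_ne_self hcent hιH
  have hΛ : IsCMTypeReps H ι Λ := ⟨hΛCM, hΛrep, hΛuniq⟩
  simp_rw [dualHalfNorm_halfNorm ha]
  rw [Finset.sum_comm]
  simp_rw [← Finset.sum_smul]
  rw [sum_nsmul_eq_of_involutive (σ := (ι • ·)) (iota_smul_iota_smul hι2) hfree
      (fun y => by rw [out_smul_smul ha, hιM])
      (fun y hy1 hyι => sum_dualCount_iota_smul hι2 hcent hΛ hy1 hyι)
      (sum_dualCount_iota_smul_one hcent hΛ),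
    sum_dualCount_one hι2 hcent hfree hN2 hΛ, out_smul_mk ha, one_smul]

/-- Let `M` be a `G`-module on which the complex conjugation `ι` acts as `−1`
and let `Λ` be a system of representatives for the conjugacy classes of the CM-types of `K`
(`[K : ℚ] = 2N`).  Then the composition
`M^H → ⊕_{Φ∈Λ} M^{H̃(Φ)} → M^H` of `(N_Φ)_{Φ∈Λ}` followed by `∑_{Φ∈Λ} N_{Φ*}` is
multiplication by `2^{N−1}` on `M^H`. -/
theorem halfnorm_composition_two_pow
    {G : Type} [Group G] [Finite G] (H H₀ : Subgroup G) (hle : H ≤ H₀) (ι : G)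
    (hι2 : ι * ι = 1) (hι1 : ι ≠ 1) (hcent : ∀ g : G, g * ι = ι * g)
    (hιH : ι ∉ H) (hιH₀ : ι ∈ H₀)
    (hcosets : ∀ g : G, g ∈ H₀ ↔ g ∈ H ∨ ι * g ∈ H)
    (N : ℕ) (hN : Nat.card (G ⧸ H₀) = N) (hN2 : Nat.card (G ⧸ H) = 2 * N)
    (Λ : Finset (Set (G ⧸ H)))
    (hΛCM : ∀ Φ ∈ Λ, IsCMType H ι Φ)
    (hΛrep : ∀ Φ : Set (G ⧸ H), IsCMType H ι Φ → ∃ Φ' ∈ Λ, ∃ τ : G, Φ = τ • Φ')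
    (hΛuniq : ∀ Φ ∈ Λ, ∀ Φ' ∈ Λ, (∃ τ : G, Φ' = τ • Φ) → Φ = Φ')
    (M : Type) [AddCommGroup M] [DistribMulAction G M]
    (hιM : ∀ m : M, ι • m = -m) :
    ∀ a : M, (∀ h ∈ H, h • a = a) →
      ∑ Φ ∈ Λ, dualHalfNorm H Φ (halfNorm H Φ a) = 2 ^ (N - 1) • a :=
  halfnorm_composition_two_pow_general H ι hι2 hcent hιH N hN2 Λ hΛCM hΛrep hΛuniq M hιM
end
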